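/- arXiv:1011.1607 — 5 statements merged into one kernel-verified Lean document; each statement's English description precedes it below -/
import Mathlib

section
/- Directed information is bounded by mutual information: for any joint pmf on (X^N, Y^N), I(X^N → Y^N) ≤ I(X^N; Y^N). -/
open Finset

/-- Prefix-matching probability under a joint pmf on pairs of sequences. -/
noncomputable def prefXY {X Y : Type*} [Fintype X] [Fintype Y]
    [DecidableEq X] [DecidableEq Y] {N : ℕ}
    (P : (Fin N → X) × (Fin N → Y) → ℝ) (k m : ℕ) (x : Fin N → X) (y : Fin N → Y) : ℝ :=
  ∑ t : (Fin N → X) × (Fin N → Y),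
    if (∀ j : Fin N, (j : ℕ) < k → t.1 j = x j) ∧ (∀ j : Fin N, (j : ℕ) < m → t.2 j = y j)
    then P t else 0

/-!
Write `p(a, b)` for the probability that the first `a` inputs and the first `b` outputs agree
with those of the outcome. The identity
`log p(N,N) / (p(N,0) p(0,N)) = ∑ᵢ [log p(i+1,i+1) p(0,i) / (p(i+1,i) p(0,i+1))
  + log p(i+1,i) p(i,0) / (p(i,i) p(i+1,0))]`
telescopes, so after averaging, mutual information is directed information plus
`∑ᵢ I(X_{i+1}; Y^i | X^i)`. Each of these conditional mutual informations is nonnegative by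
`log x ≥ 1 - 1/x`, once one knows that `P · p(i,i) p(i+1,0) / (p(i+1,i) p(i,0))` is again a
probability. That holds for the class masses of any two equivalence relations (here agreement of
`(x^i, y^i)` and of `x^{i+1}`) whose join (agreement of `x^i`) is their relational composite.
-/

namespace Setoid

section ClassMass

open scoped Classical

variable {Ω : Type*} [Fintype Ω] {P : Ω → ℝ}

noncomputable def classMass (r : Setoid Ω) (P : Ω → ℝ) (t : Ω) : ℝ := ∑ s with r s t, P s

theorem classMass_pos (hP : ∀ t, 0 < P t) (r : Setoid Ω) (t : Ω) : 0 < r.classMass P t :=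
  sum_pos (fun s _ => hP s) ⟨t, mem_filter.2 ⟨mem_univ t, r.refl' t⟩⟩

theorem classMass_eq_of_rel {r : Setoid Ω} {a b : Ω} (h : r a b) :
    r.classMass P a = r.classMass P b := by
  unfold classMass
  congr 1
  ext s
  simp only [mem_filter, mem_univ, true_and]
  exact ⟨fun hs => r.trans' hs h, fun hs => r.trans' hs (r.symm' h)⟩

theorem sum_rel_div_classMass (hP : ∀ t, 0 < P t) (r : Setoid Ω) (a : Ω) :
    ∑ t with r t a, P t / r.classMass P t = 1 := by
  rw [sum_congr rfl fun t ht => by rw [classMass_eq_of_rel (mem_filter.1 ht).2], ← sum_div]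
  exact div_self (classMass_pos hP r a).ne'

/-- The tower property `E[E[g | r]] = E[g]`, written for the unnormalised sum `∑ g`. -/
theorem sum_eq_sum_div_classMass_mul (hP : ∀ t, 0 < P t) (r : Setoid Ω) (g : Ω → ℝ) :
    ∑ t, g t = ∑ a, P a / r.classMass P a * ∑ t with r t a, g t := by
  simp_rw [mul_sum, sum_filter]
  rw [sum_comm]
  refine sum_congr rfl fun t _ => ?_
  calc g t = (∑ a with r a t, P a / r.classMass P a) * g t := by
        rw [sum_rel_div_classMass hP r t, one_mul]
    _ = _ := by
        rw [sum_filter, sum_mul]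
        exact sum_congr rfl fun a _ => by rw [r.comm' (x := t), ite_mul, zero_mul]

variable {r s c : Setoid Ω}

theorem sum_rel_rel_div_classMass_inf (hP : ∀ t, 0 < P t) (hr : r ≤ c) (hs : s ≤ c)
    (hc : ∀ a b, c a b → ∃ w, s a w ∧ r w b) (a u : Ω) :
    ∑ t with r t a ∧ s u t, P t / (r ⊓ s).classMass P t = if c u a then 1 else 0 := by
  split_ifs with h
  · obtain ⟨w, huw, hwa⟩ := hc u a h
    rw [← sum_rel_div_classMass hP (r ⊓ s) w]
    refine sum_congr (filter_congr fun t _ => ?_) fun _ _ => rfl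
    refine Iff.trans ?_ inf_iff_and.symm
    exact ⟨fun ⟨hta, hut⟩ => ⟨r.trans' hta (r.symm' hwa), s.trans' (s.symm' hut) huw⟩,
      fun ⟨htw, htw'⟩ => ⟨r.trans' htw hwa, s.trans' huw (s.symm' htw')⟩⟩
  · refine sum_eq_zero fun t ht => absurd ?_ h
    obtain ⟨hta, hut⟩ := (mem_filter.1 ht).2
    exact c.trans' (hs hut) (hr hta)

theorem sum_rel_mul_classMass_div_classMass_inf (hP : ∀ t, 0 < P t) (hr : r ≤ c) (hs : s ≤ c)
    (hc : ∀ a b, c a b → ∃ w, s a w ∧ r w b) (a : Ω) :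
    ∑ t with r t a, P t * s.classMass P t / (r ⊓ s).classMass P t = c.classMass P a := by
  have hs' : ∀ t, s.classMass P t = ∑ u, if s u t then P u else 0 := fun t => sum_filter _ _
  calc ∑ t with r t a, P t * s.classMass P t / (r ⊓ s).classMass P t
      = ∑ u, P u * ∑ t with r t a ∧ s u t, P t / (r ⊓ s).classMass P t := by
        simp_rw [hs', mul_sum, sum_div]
        rw [sum_comm]
        refine sum_congr rfl fun u _ => ?_
        rw [← filter_filter, sum_filter (s u)]
        refine sum_congr rfl fun t _ => ?_
        split_ifs <;> ring
    _ = c.classMass P a := by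
        simp_rw [sum_rel_rel_div_classMass_inf hP hr hs hc, mul_ite, mul_one, mul_zero]
        exact (sum_filter _ _).symm

theorem sum_mul_classMass_mul_div (hP : ∀ t, 0 < P t) (hr : r ≤ c) (hs : s ≤ c)
    (hc : ∀ a b, c a b → ∃ w, s a w ∧ r w b) :
    ∑ t, P t * (r.classMass P t * s.classMass P t /
      ((r ⊓ s).classMass P t * c.classMass P t)) = ∑ t, P t := by
  rw [sum_eq_sum_div_classMass_mul hP r]
  refine sum_congr rfl fun a _ => ?_
  have hra := (classMass_pos hP r a).ne'
  have hca := (classMass_pos hP c a).ne'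
  calc P a / r.classMass P a * ∑ t with r t a, P t * (r.classMass P t * s.classMass P t /
        ((r ⊓ s).classMass P t * c.classMass P t))
      = P a / c.classMass P a * ∑ t with r t a, P t * s.classMass P t / (r ⊓ s).classMass P t := by
        simp_rw [mul_sum]
        refine sum_congr rfl fun t ht => ?_
        have hta := (mem_filter.1 ht).2
        rw [classMass_eq_of_rel hta, classMass_eq_of_rel (hr hta)]
        field_simp
    _ = P a := by
        rw [sum_rel_mul_classMass_div_classMass_inf hP hr hs hc]
        field_simp

noncomputable def condMutualInfo (P : Ω → ℝ) (r s c : Setoid Ω) : ℝ :=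
  ∑ t, P t * Real.log ((r ⊓ s).classMass P t * c.classMass P t /
    (r.classMass P t * s.classMass P t))

theorem condMutualInfo_nonneg (hP : ∀ t, 0 < P t) (hr : r ≤ c) (hs : s ≤ c)
    (hc : ∀ a b, c a b → ∃ w, s a w ∧ r w b) : 0 ≤ condMutualInfo P r s c := by
  calc 0 = ∑ t, P t * (1 - r.classMass P t * s.classMass P t /
        ((r ⊓ s).classMass P t * c.classMass P t)) := by
        simp_rw [mul_sub, mul_one, sum_sub_distrib, sum_mul_classMass_mul_div hP hr hs hc, sub_self]
    _ ≤ condMutualInfo P r s c := by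
        refine sum_le_sum fun t _ => mul_le_mul_of_nonneg_left ?_ (hP t).le
        have := classMass_pos hP r t
        have := classMass_pos hP s t
        have := classMass_pos hP (r ⊓ s) t
        have := classMass_pos hP c t
        rw [← inv_div]
        exact Real.one_sub_inv_le_log_of_pos (by positivity)

end ClassMass

end Setoid

theorem Real.log_mul_div_mul {a b c d : ℝ} (ha : 0 < a) (hb : 0 < b) (hc : 0 < c) (hd : 0 < d) :
    Real.log (a * b / (c * d)) = Real.log a + Real.log b - Real.log c - Real.log d := by
  rw [Real.log_div (by positivity) (by positivity), Real.log_mul ha.ne' hb.ne',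
    Real.log_mul hc.ne' hd.ne']
  ring

theorem log_div_mul_eq_sum_range (f : ℕ → ℕ → ℝ) (hf : ∀ k m, 0 < f k m) (h00 : f 0 0 = 1)
    (N : ℕ) :
    Real.log (f N N / (f N 0 * f 0 N)) =
      ∑ i ∈ range N, (Real.log (f (i + 1) (i + 1) * f 0 i / (f (i + 1) i * f 0 (i + 1))) +
        Real.log (f (i + 1) i * f i 0 / (f i i * f (i + 1) 0))) := by
  induction N with
  | zero => simp [h00]
  | succ n ih =>
    rw [sum_range_succ, ← ih]
    simp only [Real.log_mul_div_mul (hf _ _) (hf _ _) (hf _ _) (hf _ _),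
      Real.log_div (hf _ _).ne' (mul_pos (hf _ _) (hf _ _)).ne',
      Real.log_mul (hf _ _).ne' (hf _ _).ne']
    ring

section Prefix

open scoped Classical

variable {X Y : Type*} {N : ℕ}

def prefixSetoid (k m : ℕ) : Setoid ((Fin N → X) × (Fin N → Y)) where
  r s t := (∀ j : Fin N, (j : ℕ) < k → s.1 j = t.1 j) ∧ ∀ j : Fin N, (j : ℕ) < m → s.2 j = t.2 j
  iseqv :=
    ⟨fun _ => ⟨fun _ _ => rfl, fun _ _ => rfl⟩,
      fun h => ⟨fun j hj => (h.1 j hj).symm, fun j hj => (h.2 j hj).symm⟩,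
      fun h h' => ⟨fun j hj => (h.1 j hj).trans (h'.1 j hj),
        fun j hj => (h.2 j hj).trans (h'.2 j hj)⟩⟩

theorem prefixSetoid_mono {k k' m m' : ℕ} (hk : k' ≤ k) (hm : m' ≤ m) :
    (prefixSetoid k m : Setoid ((Fin N → X) × (Fin N → Y))) ≤ prefixSetoid k' m' :=
  fun _ _ h => ⟨fun j hj => h.1 j (hj.trans_le hk), fun j hj => h.2 j (hj.trans_le hm)⟩

theorem prefixSetoid_inf_prefixSetoid_succ (i : ℕ) :
    (prefixSetoid i i ⊓ prefixSetoid (i + 1) 0 : Setoid ((Fin N → X) × (Fin N → Y))) =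
      prefixSetoid (i + 1) i :=
  le_antisymm (fun _ _ h => ⟨(Setoid.inf_iff_and.1 h).2.1, (Setoid.inf_iff_and.1 h).1.2⟩)
    (le_inf (prefixSetoid_mono i.le_succ le_rfl) (prefixSetoid_mono le_rfl i.zero_le))

theorem exists_prefixSetoid_of_prefixSetoid_zero {k k' m : ℕ} {a b : (Fin N → X) × (Fin N → Y)}
    (h : prefixSetoid k 0 a b) : ∃ w, prefixSetoid k' 0 a w ∧ prefixSetoid k m w b :=
  ⟨(a.1, b.2), ⟨fun _ _ => rfl, fun _ h => absurd h (Nat.not_lt_zero _)⟩, h.1, fun _ _ => rfl⟩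

theorem condMutualInfo_prefixSetoid_nonneg [Fintype X] [Fintype Y]
    {P : (Fin N → X) × (Fin N → Y) → ℝ} (hP : ∀ t, 0 < P t) (i : ℕ) :
    0 ≤ Setoid.condMutualInfo P (prefixSetoid i i) (prefixSetoid (i + 1) 0) (prefixSetoid i 0) :=
  Setoid.condMutualInfo_nonneg hP (prefixSetoid_mono le_rfl i.zero_le)
    (prefixSetoid_mono i.le_succ le_rfl) fun _ _ => exists_prefixSetoid_of_prefixSetoid_zero

theorem prefixSetoid_self_iff {s t : (Fin N → X) × (Fin N → Y)} :
    prefixSetoid N N s t ↔ s = t :=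
  ⟨fun h => Prod.ext (funext fun j => h.1 j j.isLt) (funext fun j => h.2 j j.isLt),
    fun h => h ▸ (prefixSetoid N N).refl' s⟩

theorem prefixSetoid_fst_iff {s t : (Fin N → X) × (Fin N → Y)} :
    prefixSetoid N 0 s t ↔ s.1 = t.1 :=
  ⟨fun h => funext fun j => h.1 j j.isLt,
    fun h => ⟨fun j _ => congrFun h j, fun _ h => absurd h (Nat.not_lt_zero _)⟩⟩

theorem prefixSetoid_snd_iff {s t : (Fin N → X) × (Fin N → Y)} :
    prefixSetoid 0 N s t ↔ s.2 = t.2 :=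
  ⟨fun h => funext fun j => h.2 j j.isLt,
    fun h => ⟨fun _ h => absurd h (Nat.not_lt_zero _), fun j _ => congrFun h j⟩⟩

variable [Fintype X] [Fintype Y] (P : (Fin N → X) × (Fin N → Y) → ℝ)
  (t : (Fin N → X) × (Fin N → Y))

theorem prefXY_eq_classMass [DecidableEq X] [DecidableEq Y] (k m : ℕ) :
    prefXY P k m t.1 t.2 = (prefixSetoid k m).classMass P t := by
  rw [Setoid.classMass, sum_filter]
  exact sum_congr rfl fun _ _ => if_congr Iff.rfl rfl rfl

theorem classMass_prefixSetoid_zero_zero :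
    (prefixSetoid 0 0).classMass P t = ∑ s, P s := by
  rw [Setoid.classMass, filter_true_of_mem]
  exact fun _ _ => ⟨fun _ h => (Nat.not_lt_zero _ h).elim, fun _ h => (Nat.not_lt_zero _ h).elim⟩

theorem classMass_prefixSetoid_self :
    (prefixSetoid N N).classMass P t = P t := by
  rw [Setoid.classMass, sum_filter]
  simp_rw [prefixSetoid_self_iff]
  simp

theorem classMass_prefixSetoid_fst :
    (prefixSetoid N 0).classMass P t = ∑ y, P (t.1, y) := by
  rw [Setoid.classMass, sum_filter, Fintype.sum_prod_type, sum_comm]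
  simp [prefixSetoid_fst_iff]

theorem classMass_prefixSetoid_snd :
    (prefixSetoid 0 N).classMass P t = ∑ x, P (x, t.2) := by
  rw [Setoid.classMass, sum_filter, Fintype.sum_prod_type_right, sum_comm]
  simp [prefixSetoid_snd_iff]

theorem log_div_marginals_eq_sum_range (hP : ∀ t, 0 < P t) (hsum : ∑ t, P t = 1) :
    Real.log (P t / ((∑ y, P (t.1, y)) * ∑ x, P (x, t.2))) =
      ∑ i ∈ range N,
        (Real.log ((prefixSetoid (i + 1) (i + 1)).classMass P t * (prefixSetoid 0 i).classMass P t /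
            ((prefixSetoid (i + 1) i).classMass P t * (prefixSetoid 0 (i + 1)).classMass P t)) +
          Real.log ((prefixSetoid (i + 1) i).classMass P t * (prefixSetoid i 0).classMass P t /
            ((prefixSetoid i i).classMass P t * (prefixSetoid (i + 1) 0).classMass P t))) := by
  rw [← classMass_prefixSetoid_self P t, ← classMass_prefixSetoid_fst P t,
    ← classMass_prefixSetoid_snd P t]
  exact log_div_mul_eq_sum_range (fun k m => (prefixSetoid k m).classMass P t)
    (fun k m => Setoid.classMass_pos hP _ t)
    (by rw [classMass_prefixSetoid_zero_zero, hsum]) N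

end Prefix

theorem directed_information_le_mutual_information_general
    {X Y : Type*} [Fintype X] [Fintype Y] [DecidableEq X] [DecidableEq Y]
    (N : ℕ)
    (P : (Fin N → X) × (Fin N → Y) → ℝ)
    (hpos : ∀ t, 0 < P t) (hsum : ∑ t, P t = 1) :
    (∑ i : Fin N, ∑ t : (Fin N → X) × (Fin N → Y),
        P t * Real.log
          (prefXY P ((i : ℕ) + 1) ((i : ℕ) + 1) t.1 t.2 * prefXY P 0 (i : ℕ) t.1 t.2 /
            (prefXY P ((i : ℕ) + 1) (i : ℕ) t.1 t.2 * prefXY P 0 ((i : ℕ) + 1) t.1 t.2)))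
    ≤ ∑ t : (Fin N → X) × (Fin N → Y),
        P t * Real.log
          (P t / ((∑ y' : Fin N → Y, P (t.1, y')) * (∑ x' : Fin N → X, P (x', t.2)))) := by
  simp only [prefXY_eq_classMass, log_div_marginals_eq_sum_range P _ hpos hsum]
  simp only [mul_sum, mul_add, sum_add_distrib, sum_range]
  rw [sum_comm (s := univ)]
  refine le_add_of_nonneg_right (sum_comm.trans_ge (sum_nonneg fun i _ => ?_))
  have h := condMutualInfo_prefixSetoid_nonneg hpos i
  rwa [Setoid.condMutualInfo, prefixSetoid_inf_prefixSetoid_succ] at h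

/-- Directed information is bounded by mutual information: for any joint pmf on
`(X^N, Y^N)` (assumed positive so all conditionals are well-defined),
`I(X^N → Y^N) = ∑_{i=1}^N I(X^i; Y_i | Y^{i-1}) ≤ I(X^N; Y^N)`. -/
theorem directed_information_le_mutual_information
    {X Y : Type*} [Fintype X] [Fintype Y] [DecidableEq X] [DecidableEq Y]
    (N : ℕ) (hN : 0 < N)
    (P : (Fin N → X) × (Fin N → Y) → ℝ)
    (hpos : ∀ t, 0 < P t) (hsum : ∑ t, P t = 1) :
    (∑ i : Fin N, ∑ t : (Fin N → X) × (Fin N → Y),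
        P t * Real.log
          (prefXY P ((i : ℕ) + 1) ((i : ℕ) + 1) t.1 t.2 * prefXY P 0 (i : ℕ) t.1 t.2 /
            (prefXY P ((i : ℕ) + 1) (i : ℕ) t.1 t.2 * prefXY P 0 ((i : ℕ) + 1) t.1 t.2)))
    ≤ ∑ t : (Fin N → X) × (Fin N → Y),
        P t * Real.log
          (P t / ((∑ y' : Fin N → Y, P (t.1, y')) * (∑ x' : Fin N → X, P (x', t.2)))) :=
  directed_information_le_mutual_information_general N P hpos hsum
end

section
/- Slope of the Gallager function at zero: for E₀(ρ, Q, W) = −log ∑_y (∑_x Q(x) W(y|x)^{1/(1+ρ)})^{1+ρ}, the derivative ∂E₀/∂ρ at ρ = 0 equals the mutual information I(X;Y) under the joint pmf Q(x)W(y|x). -/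
open Finset

/-- The Gallager function (natural logarithm). -/
noncomputable def gallagerE0 {X Y : Type*} [Fintype X] [Fintype Y]
    (Q : X → ℝ) (W : X → Y → ℝ) (ρ : ℝ) : ℝ :=
  -Real.log (∑ y : Y, (∑ x : X, Q x * W x y ^ (1 / (1 + ρ))) ^ (1 + ρ))

/-- Mutual information `I(X;Y)` under the joint pmf `Q(x)W(y|x)` (natural logarithm). -/
noncomputable def mutInfo {X Y : Type*} [Fintype X] [Fintype Y]
    (Q : X → ℝ) (W : X → Y → ℝ) : ℝ :=
  ∑ x : X, ∑ y : Y, Q x * W x y * Real.log (W x y / ∑ x' : X, Q x' * W x' y)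

/-!
Write `F(ρ) = ∑_y S_y(ρ)^{1+ρ}` with `S_y(ρ) = ∑_x Q(x) W(y|x)^{1/(1+ρ)}`, so `E₀ = -log F`.
At `ρ = 0`, `S_y(0) = P(y)` is the output distribution and `F(0) = ∑_y P(y) = 1`.
Logarithmic differentiation gives `(S_y^{1+ρ})'(0) = P(y) log P(y) - ∑_x Q(x) W(y|x) log W(y|x)`,
hence `E₀'(0) = -F'(0) = ∑_{x,y} Q(x) W(y|x) log (W(y|x) / P(y)) = I(X;Y)`.
-/

open Real

lemma hasDerivAt_rpow_one_div_one_add_zero {a : ℝ} (ha : 0 < a) :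
    HasDerivAt (fun ρ : ℝ => a ^ (1 / (1 + ρ))) (-(a * log a)) 0 := by
  have hinv : HasDerivAt (fun ρ : ℝ => 1 / (1 + ρ)) (-1) 0 := by
    simpa [one_div] using ((hasDerivAt_id (0 : ℝ)).const_add 1).fun_inv (by norm_num)
  simpa [Function.comp_def] using
    ((hasStrictDerivAt_const_rpow ha (1 / (1 + 0))).hasDerivAt).comp 0 hinv

lemma hasDerivAt_sum_mul_rpow_one_div_one_add_rpow_one_add_zero {ι : Type*} [Fintype ι]
    (q a : ι → ℝ) (ha : ∀ i, 0 < a i) (hs : 0 < ∑ i, q i * a i) :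
    HasDerivAt (fun ρ : ℝ => (∑ i, q i * a i ^ (1 / (1 + ρ))) ^ (1 + ρ))
      ((∑ i, q i * a i) * log (∑ i, q i * a i) - ∑ i, q i * (a i * log (a i))) 0 := by
  have hbase : HasDerivAt (fun ρ : ℝ => ∑ i, q i * a i ^ (1 / (1 + ρ)))
      (∑ i, -(q i * (a i * log (a i)))) 0 :=
    HasDerivAt.fun_sum fun i _ => by
      simpa using (hasDerivAt_rpow_one_div_one_add_zero (ha i)).const_mul (q i)
  have hexp : HasDerivAt (fun ρ : ℝ => 1 + ρ) 1 0 := by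
    simpa using (hasDerivAt_id (0 : ℝ)).const_add 1
  have := hbase.rpow hexp (by simpa using hs)
  simp only [add_zero, div_one, rpow_one, sub_self, rpow_zero, one_mul, mul_one,
    sum_neg_distrib] at this
  convert this using 1
  ring

lemma sum_mul_pos_of_sum_pos {ι : Type*} [Fintype ι] {q a : ι → ℝ}
    (hq : ∀ i, 0 ≤ q i) (hq_sum : 0 < ∑ i, q i) (ha : ∀ i, 0 < a i) :
    0 < ∑ i, q i * a i := by
  obtain ⟨i, -, hi⟩ := exists_lt_of_sum_lt (f := fun _ => (0 : ℝ)) (by simpa using hq_sum)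
  exact sum_pos' (fun j _ => mul_nonneg (hq j) (ha j).le) ⟨i, mem_univ i, mul_pos hi (ha i)⟩

lemma sum_sum_mul_eq_one {X Y : Type*} [Fintype X] [Fintype Y] {Q : X → ℝ} {W : X → Y → ℝ}
    (hQ_sum : ∑ x, Q x = 1) (hW_sum : ∀ x, ∑ y, W x y = 1) :
    ∑ y, ∑ x, Q x * W x y = 1 := by
  simp [sum_comm (s := univ (α := Y)), ← mul_sum, hW_sum, hQ_sum]

lemma mutInfo_eq_sum_sub {X Y : Type*} [Fintype X] [Fintype Y] (Q : X → ℝ) (W : X → Y → ℝ)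
    (hW : ∀ x y, W x y ≠ 0) (hP : ∀ y, ∑ x, Q x * W x y ≠ 0) :
    mutInfo Q W = ∑ y, (∑ x, Q x * (W x y * log (W x y))
      - (∑ x, Q x * W x y) * log (∑ x, Q x * W x y)) := by
  rw [mutInfo, sum_comm]
  refine sum_congr rfl fun y _ => ?_
  simp only [log_div (hW _ y) (hP y), mul_sub, sum_sub_distrib, sum_mul, mul_assoc]

/-- Slope of the Gallager function at zero: `∂E₀/∂ρ` at `ρ = 0` equals the mutual
information `I(X;Y)` under the joint pmf `Q(x)W(y|x)`. -/
theorem gallagerE0_deriv_at_zero {X Y : Type*} [Fintype X] [Fintype Y]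
    (Q : X → ℝ) (hQ : ∀ x, 0 ≤ Q x) (hQsum : ∑ x, Q x = 1)
    (W : X → Y → ℝ) (hW : ∀ x y, 0 < W x y) (hWsum : ∀ x, ∑ y, W x y = 1) :
    HasDerivAt (gallagerE0 Q W) (mutInfo Q W) 0 := by
  have hP : ∀ y, 0 < ∑ x, Q x * W x y := fun y =>
    sum_mul_pos_of_sum_pos hQ (by rw [hQsum]; exact one_pos) fun x => hW x y
  have hF := HasDerivAt.fun_sum (u := univ) fun y _ =>
    hasDerivAt_sum_mul_rpow_one_div_one_add_rpow_one_add_zero Q (W · y) (hW · y) (hP y)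
  have hF0 : ∑ y, (∑ x, Q x * W x y ^ (1 / (1 + (0 : ℝ)))) ^ (1 + (0 : ℝ)) = 1 := by
    simpa using sum_sum_mul_eq_one hQsum hWsum
  rw [mutInfo_eq_sum_sub Q W (fun x y => (hW x y).ne') fun y => (hP y).ne']
  refine (hF.log (by rw [hF0]; exact one_ne_zero)).fun_neg.congr_deriv ?_
  rw [hF0, div_one, ← sum_neg_distrib]
  simp only [neg_sub]
end

section
/- Monotone upper bound via derivative: for the Gallager function E₀(ρ, Q, W), one has ∂E₀(ρ,Q,W)/∂ρ ≤ I(X;Y) for all ρ ∈ [0,1], and consequently E₀(ρ,Q,W) ≤ ρ · I(X;Y) for all ρ ∈ [0,1]. -/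
open Finset

open Real Filter Topology

/-! `ρ ↦ log ∑_y (∑_x Q(x) W(y|x)^{1/(1+ρ)})^{1+ρ}` is a nested log-sum-exp, so Jensen's
inequality for `exp`, applied once over `x` and once over `y`, bounds it from below by an
explicit affine function of `ρ` that touches it at any chosen `ρ₀ > -1`. Hence `E₀` lies below
a line through each of its points, whose slope must be `E₀'(ρ₀)`; slopes of such lines decrease,
and at `ρ₀ = 0` we have `E₀(0) = 0` with slope `I(X;Y)`. -/

theorem log_sum_add_sum_mul_div_le_log_sum {ι : Type*} {s : Finset ι} {a b d : ι → ℝ}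
    (ha : ∀ i ∈ s, 0 ≤ a i) (hsum : 0 < ∑ i ∈ s, a i) (hb : ∀ i ∈ s, a i * exp (d i) ≤ b i) :
    log (∑ i ∈ s, a i) + (∑ i ∈ s, a i * d i) / ∑ i ∈ s, a i ≤ log (∑ i ∈ s, b i) := by
  set A := ∑ i ∈ s, a i
  have jensen : exp (∑ i ∈ s, (a i / A) * d i) ≤ ∑ i ∈ s, (a i / A) * exp (d i) :=
    convexOn_exp.map_sum_le (fun i hi => div_nonneg (ha i hi) hsum.le)
      (by rw [← sum_div, div_self hsum.ne']) (fun _ _ => Set.mem_univ _)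
  have key : exp (log A + (∑ i ∈ s, a i * d i) / A) ≤ ∑ i ∈ s, b i :=
    calc exp (log A + (∑ i ∈ s, a i * d i) / A)
        = A * exp (∑ i ∈ s, (a i / A) * d i) := by
          rw [exp_add, exp_log hsum, sum_div]; simp only [div_mul_eq_mul_div]
      _ ≤ A * ∑ i ∈ s, (a i / A) * exp (d i) := mul_le_mul_of_nonneg_left jensen hsum.le
      _ = ∑ i ∈ s, a i * exp (d i) := by
          rw [mul_sum]; exact sum_congr rfl fun i _ => by field_simp
      _ ≤ ∑ i ∈ s, b i := sum_le_sum hb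
  simpa using log_le_log (exp_pos _) key

theorem DifferentiableAt.deriv_eq_of_eventually_le {f : ℝ → ℝ} {x k : ℝ}
    (hf : DifferentiableAt ℝ f x) (h : ∀ᶠ y in 𝓝 x, f y ≤ f x + k * (y - x)) :
    deriv f x = k := by
  have hline : HasDerivAt (fun y => k * (y - x)) k x := by
    simpa using ((hasDerivAt_id x).sub_const x).const_mul k
  have hmax : IsLocalMax (fun y => f y - k * (y - x)) x := by
    filter_upwards [h] with y hy
    simp only [sub_self, mul_zero, sub_zero]
    linarith
  have := hmax.deriv_eq_zero
  rw [deriv_fun_sub hf hline.differentiableAt, hline.deriv] at this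
  linarith

theorem antitoneOn_of_le_add_mul_sub {f k : ℝ → ℝ} {s : Set ℝ}
    (h : ∀ x ∈ s, ∀ y ∈ s, f y ≤ f x + k x * (y - x)) : AntitoneOn k s := by
  intro x hx y hy hxy
  rcases hxy.eq_or_lt with rfl | hlt
  · rfl
  · have := h x hx y hy
    have := h y hy x hx
    nlinarith

namespace Gallager

variable {X Y : Type*} [Fintype X] (Q : X → ℝ) (W : X → Y → ℝ)

noncomputable def innerSum (ρ : ℝ) (y : Y) : ℝ := ∑ x, Q x * W x y ^ (1 / (1 + ρ))

noncomputable def outerSum [Fintype Y] (ρ : ℝ) : ℝ := ∑ y, innerSum Q W ρ y ^ (1 + ρ)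

noncomputable def tiltedLogMean (ρ : ℝ) (y : Y) : ℝ :=
  (∑ x, Q x * W x y ^ (1 / (1 + ρ)) * log (W x y)) / innerSum Q W ρ y

noncomputable def slope [Fintype Y] (ρ : ℝ) : ℝ :=
  (∑ y, innerSum Q W ρ y ^ (1 + ρ) * (tiltedLogMean Q W ρ y / (1 + ρ) - log (innerSum Q W ρ y)))
    / outerSum Q W ρ

variable {Q W}

theorem innerSum_pos (hQ : ∀ x, 0 ≤ Q x) (hQ0 : ∃ x, 0 < Q x) (hW : ∀ x y, 0 < W x y)
    (ρ : ℝ) (y : Y) : 0 < innerSum Q W ρ y := by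
  obtain ⟨x₀, hx₀⟩ := hQ0
  exact sum_pos' (fun x _ => mul_nonneg (hQ x) (rpow_nonneg (hW x y).le _))
    ⟨x₀, mem_univ _, mul_pos hx₀ (rpow_pos_of_pos (hW x₀ y) _)⟩

theorem outerSum_pos [Fintype Y] [Nonempty Y] (hQ : ∀ x, 0 ≤ Q x) (hQ0 : ∃ x, 0 < Q x)
    (hW : ∀ x y, 0 < W x y) (ρ : ℝ) : 0 < outerSum Q W ρ :=
  sum_pos (fun y _ => rpow_pos_of_pos (innerSum_pos hQ hQ0 hW ρ y) _) univ_nonempty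

theorem log_innerSum_le (hQ : ∀ x, 0 ≤ Q x) (hQ0 : ∃ x, 0 < Q x) (hW : ∀ x y, 0 < W x y)
    (ρ₀ ρ : ℝ) (y : Y) :
    log (innerSum Q W ρ₀ y) + (1 / (1 + ρ) - 1 / (1 + ρ₀)) * tiltedLogMean Q W ρ₀ y
      ≤ log (innerSum Q W ρ y) := by
  have h := log_sum_add_sum_mul_div_le_log_sum (s := univ)
    (a := fun x => Q x * W x y ^ (1 / (1 + ρ₀))) (b := fun x => Q x * W x y ^ (1 / (1 + ρ)))
    (d := fun x => (1 / (1 + ρ) - 1 / (1 + ρ₀)) * log (W x y))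
    (fun x _ => mul_nonneg (hQ x) (rpow_nonneg (hW x y).le _)) (innerSum_pos hQ hQ0 hW ρ₀ y)
    (fun x _ => le_of_eq <| by
      rw [mul_assoc, rpow_def_of_pos (hW x y), rpow_def_of_pos (hW x y), ← exp_add]
      ring_nf)
  have hmean : (∑ x, Q x * W x y ^ (1 / (1 + ρ₀)) * ((1 / (1 + ρ) - 1 / (1 + ρ₀)) * log (W x y)))
      / innerSum Q W ρ₀ y = (1 / (1 + ρ) - 1 / (1 + ρ₀)) * tiltedLogMean Q W ρ₀ y := by
    rw [tiltedLogMean, mul_div_assoc', mul_sum]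
    exact congrArg (· / _) (sum_congr rfl fun x _ => by ring)
  rwa [← hmean]

theorem gallagerE0_le_add_slope_mul_sub [Fintype Y] [Nonempty Y] (hQ : ∀ x, 0 ≤ Q x)
    (hQ0 : ∃ x, 0 < Q x) (hW : ∀ x y, 0 < W x y) {ρ₀ ρ : ℝ} (h₀ : -1 < ρ₀) (h : -1 < ρ) :
    gallagerE0 Q W ρ ≤ gallagerE0 Q W ρ₀ + slope Q W ρ₀ * (ρ - ρ₀) := by
  have hB := innerSum_pos hQ hQ0 hW
  set g := fun y => tiltedLogMean Q W ρ₀ y / (1 + ρ₀) - log (innerSum Q W ρ₀ y)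
  have hexp : ∀ y, innerSum Q W ρ₀ y ^ (1 + ρ₀) * exp (-(ρ - ρ₀) * g y)
      ≤ innerSum Q W ρ y ^ (1 + ρ) := fun y => by
    have hinner := mul_le_mul_of_nonneg_left (log_innerSum_le hQ hQ0 hW ρ₀ ρ y)
      (by linarith : (0 : ℝ) ≤ 1 + ρ)
    rw [rpow_def_of_pos (hB ρ₀ y), rpow_def_of_pos (hB ρ y), ← exp_add, exp_le_exp]
    refine le_of_eq_of_le ?_ (hinner.trans_eq (mul_comm _ _))
    have : 1 + ρ₀ ≠ 0 := by linarith
    have : 1 + ρ ≠ 0 := by linarith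
    simp only [g]
    field_simp
    ring
  have h : log (outerSum Q W ρ₀)
      + (∑ y, innerSum Q W ρ₀ y ^ (1 + ρ₀) * (-(ρ - ρ₀) * g y)) / outerSum Q W ρ₀
      ≤ log (outerSum Q W ρ) := log_sum_add_sum_mul_div_le_log_sum
    (fun y _ => (rpow_pos_of_pos (hB ρ₀ y) _).le) (outerSum_pos hQ hQ0 hW ρ₀) (fun y _ => hexp y)
  have hslope : (∑ y, innerSum Q W ρ₀ y ^ (1 + ρ₀) * (-(ρ - ρ₀) * g y)) / outerSum Q W ρ₀
      = -(slope Q W ρ₀ * (ρ - ρ₀)) := by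
    rw [slope, div_mul_eq_mul_div, ← neg_div, sum_mul, ← sum_neg_distrib]
    exact congrArg (· / _) (sum_congr rfl fun y _ => by ring)
  rw [hslope] at h
  change -log (outerSum Q W ρ) ≤ -log (outerSum Q W ρ₀) + _
  linarith

theorem differentiableAt_gallagerE0 [Fintype Y] [Nonempty Y] (hQ : ∀ x, 0 ≤ Q x)
    (hQ0 : ∃ x, 0 < Q x) (hW : ∀ x y, 0 < W x y) {ρ₀ : ℝ} (h₀ : -1 < ρ₀) :
    DifferentiableAt ℝ (gallagerE0 Q W) ρ₀ := by
  have hρ : (1 : ℝ) + ρ₀ ≠ 0 := by linarith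
  have hA : DifferentiableAt ℝ (outerSum Q W) ρ₀ := by
    unfold outerSum innerSum
    fun_prop (disch := first
      | exact hρ
      | exact (hW _ _).ne'
      | exact (innerSum_pos hQ hQ0 hW ρ₀ _).ne')
  exact (hA.log (outerSum_pos hQ hQ0 hW ρ₀).ne').neg

theorem deriv_gallagerE0 [Fintype Y] [Nonempty Y] (hQ : ∀ x, 0 ≤ Q x) (hQ0 : ∃ x, 0 < Q x)
    (hW : ∀ x y, 0 < W x y) {ρ₀ : ℝ} (h₀ : -1 < ρ₀) :
    deriv (gallagerE0 Q W) ρ₀ = slope Q W ρ₀ :=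
  (differentiableAt_gallagerE0 hQ hQ0 hW h₀).deriv_eq_of_eventually_le <|
    (eventually_gt_nhds h₀).mono fun _ h => gallagerE0_le_add_slope_mul_sub hQ hQ0 hW h₀ h

theorem innerSum_zero (y : Y) : innerSum Q W 0 y = ∑ x, Q x * W x y := by
  simp [innerSum]

theorem outerSum_zero [Fintype Y] (hQsum : ∑ x, Q x = 1) (hWsum : ∀ x, ∑ y, W x y = 1) :
    outerSum Q W 0 = 1 := by
  simp only [outerSum, innerSum_zero, add_zero, rpow_one]
  rw [sum_comm]
  simp [← mul_sum, hWsum, hQsum]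

theorem gallagerE0_zero [Fintype Y] (hQsum : ∑ x, Q x = 1) (hWsum : ∀ x, ∑ y, W x y = 1) :
    gallagerE0 Q W 0 = 0 := by
  change -log (outerSum Q W 0) = 0
  simp [outerSum_zero hQsum hWsum]

theorem slope_zero [Fintype Y] (hQ : ∀ x, 0 ≤ Q x) (hQ0 : ∃ x, 0 < Q x)
    (hQsum : ∑ x, Q x = 1) (hW : ∀ x y, 0 < W x y) (hWsum : ∀ x, ∑ y, W x y = 1) :
    slope Q W 0 = mutInfo Q W := by
  rw [slope, outerSum_zero hQsum hWsum, div_one, mutInfo, sum_comm]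
  refine sum_congr rfl fun y _ => ?_
  have hP := (innerSum_pos hQ hQ0 hW 0 y).ne'
  rw [innerSum_zero] at hP
  simp only [tiltedLogMean, innerSum_zero, add_zero, div_one, rpow_one]
  rw [mul_sub, mul_div_cancel₀ _ hP, sum_mul, ← sum_sub_distrib]
  refine sum_congr rfl fun x _ => ?_
  rw [log_div (hW x y).ne' hP]
  ring

end Gallager

/-- Monotone upper bound via the derivative: `∂E₀(ρ,Q,W)/∂ρ ≤ I(X;Y)` for all
`ρ ∈ [0,1]`, and consequently `E₀(ρ,Q,W) ≤ ρ · I(X;Y)` for all `ρ ∈ [0,1]`. -/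
theorem gallagerE0_le_rho_mutInfo {X Y : Type*} [Fintype X] [Fintype Y]
    (Q : X → ℝ) (hQ : ∀ x, 0 ≤ Q x) (hQsum : ∑ x, Q x = 1)
    (W : X → Y → ℝ) (hW : ∀ x y, 0 < W x y) (hWsum : ∀ x, ∑ y, W x y = 1) :
    (∀ ρ ∈ Set.Icc (0 : ℝ) 1, deriv (gallagerE0 Q W) ρ ≤ mutInfo Q W) ∧
    (∀ ρ ∈ Set.Icc (0 : ℝ) 1, gallagerE0 Q W ρ ≤ ρ * mutInfo Q W) := by
  obtain ⟨x₀, -, hx₀⟩ := exists_lt_of_sum_lt (f := 0) (g := Q) (s := univ) (by simp [hQsum])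
  have hQ0 : ∃ x, 0 < Q x := ⟨x₀, hx₀⟩
  have : Nonempty Y := by
    by_contra hY
    simpa [not_nonempty_iff.mp hY] using hWsum x₀
  have hsupp : ∀ ρ₀ ∈ Set.Ioi (-1 : ℝ), ∀ ρ ∈ Set.Ioi (-1 : ℝ),
      gallagerE0 Q W ρ ≤ gallagerE0 Q W ρ₀ + Gallager.slope Q W ρ₀ * (ρ - ρ₀) :=
    fun _ h₀ _ h => Gallager.gallagerE0_le_add_slope_mul_sub hQ hQ0 hW h₀ h
  have hslope₀ := Gallager.slope_zero hQ hQ0 hQsum hW hWsum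
  have hρ : ∀ ρ ∈ Set.Icc (0 : ℝ) 1, ρ ∈ Set.Ioi (-1 : ℝ) := fun ρ hρ => by
    simp only [Set.mem_Ioi]; linarith [hρ.1]
  refine ⟨fun ρ hρ₁ => ?_, fun ρ hρ₁ => ?_⟩
  · rw [Gallager.deriv_gallagerE0 hQ hQ0 hW (hρ ρ hρ₁), ← hslope₀]
    exact antitoneOn_of_le_add_mul_sub hsupp (hρ 0 ⟨le_rfl, zero_le_one⟩) (hρ ρ hρ₁) hρ₁.1
  · simpa [Gallager.gallagerE0_zero hQsum hWsum, hslope₀, mul_comm]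
      using hsupp 0 (hρ 0 ⟨le_rfl, zero_le_one⟩) ρ (hρ ρ hρ₁)
end

section
/- Variational lower bound for directed information with Lagrangian (key step in BAA-Action): for joint pmfs induced by r₁(x^N,a^N ∥ z^{N-1}) and any reference r₀ on the same causally conditioned domain, (1/N) I_{r₁}(X^N → Y^N) − λ E_{r₁}[Λ(A^N)] ≤ ∑_{x^N,a^N,y^{N-1}} r₁(x^N,a^N ∥ z^{N-1}) ∑_{y_N} p(y^N ∥ x^N) log [ p(y^N ∥ x^N) 2^{−Nλ Λ(a^N)} / ∑_{x^N,a^N} r₀(x^N,a^N ∥ z^{N-1}) p(y^N ∥ x^N) ], with the gap equal to the relative entropy D(p₁(y^N) ‖ p₀(y^N)) ≥ 0 between the output marginals induced by r₁ and r₀. -/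
open Finset

/-- Output marginal `p(y^N) = ∑_{x^N,a^N} r(x^N,a^N ∥ z^{N-1}) p(y^N ∥ x^N)` induced by
a causally conditioned input distribution `r` (viewed, through the deterministic map
`z^N = f(a^N, y^N)`, as a function of `(x^N, a^N, y^N)`) and the channel `pch`. -/
noncomputable def outMarg {XS AS YS : Type*} [Fintype XS] [Fintype AS]
    (pch : XS → YS → ℝ) (r : XS → AS → YS → ℝ) (y : YS) : ℝ :=
  ∑ x : XS, ∑ a : AS, r x a y * pch x y

lemma gibbs' {ι : Type*} [Fintype ι] (p q : ι → ℝ) (hp : ∀ i, 0 < p i) (hq : ∀ i, 0 < q i)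
    (hps : ∑ i, p i = 1) (hqs : ∑ i, q i = 1) :
    0 ≤ ∑ i, p i * Real.logb 2 (p i / q i) := by
  have key : ∑ i, p i * Real.log (q i / p i) ≤ 0 := by
    calc ∑ i, p i * Real.log (q i / p i) ≤ ∑ i, p i * (q i / p i - 1) := by
          refine Finset.sum_le_sum fun i _ => ?_
          exact mul_le_mul_of_nonneg_left
            (Real.log_le_sub_one_of_pos (div_pos (hq i) (hp i))) (hp i).le
      _ = ∑ i, (q i - p i) := by
          refine Finset.sum_congr rfl fun i _ => ?_
          field_simp [(hp i).ne']
      _ = 0 := by rw [Finset.sum_sub_distrib, hps, hqs]; ring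
  have h2 : 0 ≤ ∑ i, p i * Real.log (p i / q i) := by
    have he : ∑ i, p i * Real.log (p i / q i) = -∑ i, p i * Real.log (q i / p i) := by
      rw [← Finset.sum_neg_distrib]
      refine Finset.sum_congr rfl fun i _ => ?_
      rw [← mul_neg, ← Real.log_inv, inv_div]
    rw [he]; linarith
  have : ∑ i, p i * Real.logb 2 (p i / q i)
      = (∑ i, p i * Real.log (p i / q i)) / Real.log 2 := by
    rw [Finset.sum_div]
    refine Finset.sum_congr rfl fun i _ => ?_
    rw [Real.logb, mul_div_assoc]
  rw [this]
  exact div_nonneg h2 (Real.log_nonneg (by norm_num))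

set_option maxHeartbeats 1000000 in
/-- Variational lower bound for directed information with a Lagrangian (key step in the
BAA-Action algorithm): for the joints induced by `r₁` and any reference `r₀`,
`(1/N) I_{r₁}(X^N → Y^N) − λ E_{r₁}[Λ(A^N)]` is at most the displayed cross-term with
`r₀` in the denominator, with the gap equal to `(1/N)` times the relative entropy
`D(p₁(y^N) ‖ p₀(y^N)) ≥ 0` between the induced output marginals.  Here
`Λ(a^N) = (1/N)∑_i Λ(a_i)`, logarithms are base 2, the directed information is in its
`E[log(p(Y^N ∥ X^N)/p(Y^N))]` form, and all probabilities are assumed positive. -/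
theorem baa_variational_lower_bound
    {X A Z Y : Type*} [Fintype X] [Fintype A] [Fintype Z] [Fintype Y]
    (N : ℕ) (hN : 0 < N) (lam : ℝ) (hlam : 0 ≤ lam)
    (Λ : A → ℝ) (hΛ : ∀ a, 0 ≤ Λ a)
    (f : A → Y → Z)
    (pch : (Fin N → X) → (Fin N → Y) → ℝ)
    (hchpos : ∀ x y, 0 < pch x y) (hchsum : ∀ x, ∑ y, pch x y = 1)
    (r0 r1 : (Fin N → X) → (Fin N → A) → (Fin N → Y) → ℝ)
    (hr0pos : ∀ x a y, 0 < r0 x a y) (hr1pos : ∀ x a y, 0 < r1 x a y)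
    (hr0sum : ∑ x : Fin N → X, ∑ a : Fin N → A, ∑ y : Fin N → Y, r0 x a y * pch x y = 1)
    (hr1sum : ∑ x : Fin N → X, ∑ a : Fin N → A, ∑ y : Fin N → Y, r1 x a y * pch x y = 1) :
    let avgCost : (Fin N → A) → ℝ := fun a => (1 / (N : ℝ)) * ∑ i, Λ (a i)
    let L : ℝ :=
      (1 / (N : ℝ)) * (∑ x : Fin N → X, ∑ a : Fin N → A, ∑ y : Fin N → Y,
          r1 x a y * pch x y * Real.logb 2 (pch x y / outMarg pch r1 y)) -
        lam * (∑ x : Fin N → X, ∑ a : Fin N → A, ∑ y : Fin N → Y,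
          r1 x a y * pch x y * avgCost a)
    let Rhs : ℝ :=
      (1 / (N : ℝ)) * (∑ x : Fin N → X, ∑ a : Fin N → A, ∑ y : Fin N → Y,
        r1 x a y * pch x y *
          Real.logb 2 (pch x y * (2 : ℝ) ^ (-((N : ℝ) * lam * avgCost a)) /
            outMarg pch r0 y))
    let KL : ℝ := ∑ y : Fin N → Y,
      outMarg pch r1 y * Real.logb 2 (outMarg pch r1 y / outMarg pch r0 y)
    L ≤ Rhs ∧ Rhs - L = (1 / (N : ℝ)) * KL ∧ 0 ≤ KL := by
  intro avgCost L Rhs KL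
  have hXne : (univ : Finset (Fin N → X)).Nonempty := by
    rcases (univ : Finset (Fin N → X)).eq_empty_or_nonempty with h | h
    · rw [h] at hr1sum; simp at hr1sum
    · exact h
  have hAne : (univ : Finset (Fin N → A)).Nonempty := by
    rcases (univ : Finset (Fin N → A)).eq_empty_or_nonempty with h | h
    · simp [h] at hr1sum
    · exact h
  have hp1pos : ∀ y, 0 < outMarg pch r1 y := fun y =>
    Finset.sum_pos (fun x _ => Finset.sum_pos
      (fun a _ => mul_pos (hr1pos x a y) (hchpos x y)) hAne) hXne
  have hp0pos : ∀ y, 0 < outMarg pch r0 y := fun y =>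
    Finset.sum_pos (fun x _ => Finset.sum_pos
      (fun a _ => mul_pos (hr0pos x a y) (hchpos x y)) hAne) hXne
  have hm1 : ∑ y, outMarg pch r1 y = 1 := by
    unfold outMarg
    rw [Finset.sum_comm, ← hr1sum]
    exact Finset.sum_congr rfl fun x _ => Finset.sum_comm
  have hm0 : ∑ y, outMarg pch r0 y = 1 := by
    unfold outMarg
    rw [Finset.sum_comm, ← hr0sum]
    exact Finset.sum_congr rfl fun x _ => Finset.sum_comm
  have hKLnn : 0 ≤ KL := gibbs' _ _ hp1pos hp0pos hm1 hm0
  have hNpos : (0 : ℝ) < (N : ℝ) := by exact_mod_cast hN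
  have hgap : Rhs - L = (1 / (N : ℝ)) * KL := by
    have hlog : ∀ (x : Fin N → X) (a : Fin N → A) (y : Fin N → Y),
        Real.logb 2 (pch x y * (2 : ℝ) ^ (-((N : ℝ) * lam * avgCost a)) / outMarg pch r0 y)
        = Real.logb 2 (pch x y / outMarg pch r1 y)
          + Real.logb 2 (outMarg pch r1 y / outMarg pch r0 y)
          - (N : ℝ) * lam * avgCost a := by
      intro x a y
      have h2 : (0:ℝ) < (2 : ℝ) ^ (-((N : ℝ) * lam * avgCost a)) :=
        Real.rpow_pos_of_pos (by norm_num) _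
      rw [Real.logb_div (mul_pos (hchpos x y) h2).ne' (hp0pos y).ne',
          Real.logb_mul (hchpos x y).ne' h2.ne',
          Real.logb_div (hchpos x y).ne' (hp1pos y).ne',
          Real.logb_div (hp1pos y).ne' (hp0pos y).ne',
          Real.logb_rpow (by norm_num) (by norm_num)]
      ring
    have hsplit : ∀ (x : Fin N → X) (a : Fin N → A) (y : Fin N → Y),
        r1 x a y * pch x y *
            Real.logb 2 (pch x y * (2 : ℝ) ^ (-((N : ℝ) * lam * avgCost a)) / outMarg pch r0 y)
        = r1 x a y * pch x y * Real.logb 2 (pch x y / outMarg pch r1 y)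
          + r1 x a y * pch x y * Real.logb 2 (outMarg pch r1 y / outMarg pch r0 y)
          - (N : ℝ) * lam * (r1 x a y * pch x y * avgCost a) := by
      intro x a y
      rw [hlog x a y]; ring
    have hT : (∑ x : Fin N → X, ∑ a : Fin N → A, ∑ y : Fin N → Y,
        r1 x a y * pch x y * Real.logb 2 (outMarg pch r1 y / outMarg pch r0 y)) = KL := by
      show _ = ∑ y : Fin N → Y,
        outMarg pch r1 y * Real.logb 2 (outMarg pch r1 y / outMarg pch r0 y)
      have h1 : ∀ x : Fin N → X, (∑ a : Fin N → A, ∑ y : Fin N → Y,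
          r1 x a y * pch x y * Real.logb 2 (outMarg pch r1 y / outMarg pch r0 y))
          = ∑ y : Fin N → Y, ∑ a : Fin N → A,
          r1 x a y * pch x y * Real.logb 2 (outMarg pch r1 y / outMarg pch r0 y) :=
        fun x => Finset.sum_comm
      rw [Finset.sum_congr rfl (fun x _ => h1 x), Finset.sum_comm]
      refine Finset.sum_congr rfl fun y _ => ?_
      rw [show outMarg pch r1 y = ∑ x : Fin N → X, ∑ a : Fin N → A, r1 x a y * pch x y from rfl,
        Finset.sum_mul]
      refine Finset.sum_congr rfl fun x _ => ?_
      rw [Finset.sum_mul]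
    have hS1 : (∑ x : Fin N → X, ∑ a : Fin N → A, ∑ y : Fin N → Y,
        r1 x a y * pch x y *
          Real.logb 2 (pch x y * (2 : ℝ) ^ (-((N : ℝ) * lam * avgCost a)) / outMarg pch r0 y))
        = (∑ x : Fin N → X, ∑ a : Fin N → A, ∑ y : Fin N → Y,
            r1 x a y * pch x y * Real.logb 2 (pch x y / outMarg pch r1 y))
          + (∑ x : Fin N → X, ∑ a : Fin N → A, ∑ y : Fin N → Y,
            r1 x a y * pch x y * Real.logb 2 (outMarg pch r1 y / outMarg pch r0 y))
          - (N : ℝ) * lam * (∑ x : Fin N → X, ∑ a : Fin N → A, ∑ y : Fin N → Y,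
            r1 x a y * pch x y * avgCost a) := by
      simp_rw [hsplit]
      simp only [Finset.sum_add_distrib, Finset.sum_sub_distrib, ← Finset.mul_sum]
    have hLd : L = (1 / (N : ℝ)) * (∑ x : Fin N → X, ∑ a : Fin N → A, ∑ y : Fin N → Y,
          r1 x a y * pch x y * Real.logb 2 (pch x y / outMarg pch r1 y)) -
        lam * (∑ x : Fin N → X, ∑ a : Fin N → A, ∑ y : Fin N → Y,
          r1 x a y * pch x y * avgCost a) := rfl
    have hRd : Rhs = (1 / (N : ℝ)) * (∑ x : Fin N → X, ∑ a : Fin N → A, ∑ y : Fin N → Y,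
        r1 x a y * pch x y *
          Real.logb 2 (pch x y * (2 : ℝ) ^ (-((N : ℝ) * lam * avgCost a)) /
            outMarg pch r0 y)) := rfl
    rw [hRd, hLd, hS1, hT]
    field_simp
    ring
  refine ⟨?_, hgap, hKLnn⟩
  have h0 : 0 ≤ Rhs - L := by
    rw [hgap]; positivity
  linarith
end

section
/- For a fixed 'reverse' conditional q(x^N, a^N | y^N) and fixed channel, the q-maximization step of the alternating algorithm is optimal: the functional ℐ(r, q) = ∑ r(x^N,a^N ∥ z^{N-1}) p(y^N ∥ x^N) log( q(x^N,a^N|y^N) / r(x^N,a^N ∥ z^{N-1}) ) is maximized over q by q*(x^N,a^N|y^N) = r(x^N,a^N ∥ z^{N-1}) p(y^N ∥ x^N) / ∑_{x^N,a^N} r(x^N,a^N ∥ z^{N-1}) p(y^N ∥ x^N), i.e., ℐ(r, q*) ≥ ℐ(r, q) for every valid q, with ℐ(r, q*) equal to the directed information I(X^N → Y^N). -/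
open Finset

lemma swap3 {α β γ : Type*} [Fintype α] [Fintype β] [Fintype γ]
    (g : α → β → γ → ℝ) :
    ∑ x : α, ∑ a : β, ∑ y : γ, g x a y = ∑ y : γ, ∑ x : α, ∑ a : β, g x a y := by
  simp_rw [Finset.sum_comm (s := (univ : Finset β)) (t := (univ : Finset γ))]
  rw [Finset.sum_comm]

/-- Optimality of the q-maximization step of the alternating (BAA-Action) algorithm:
for fixed causally conditioned `r` and fixed channel, the functional
`ℐ(r, q) = ∑ r·p·log(q/r)` is maximized over conditional pmfs `q(x^N,a^N|y^N)` by
`q*(x^N,a^N|y^N) = r·p / ∑_{x,a} r·p`, and `ℐ(r, q*)` equals the directed information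
`I(X^N → Y^N) = E[log(p(Y^N ∥ X^N)/p(Y^N))]`.  All probabilities are assumed
positive. -/
theorem baa_q_step_optimal
    {X A Z Y : Type*} [Fintype X] [Fintype A] [Fintype Z] [Fintype Y]
    (N : ℕ) (hN : 0 < N)
    (f : A → Y → Z)
    (pch : (Fin N → X) → (Fin N → Y) → ℝ)
    (hchpos : ∀ x y, 0 < pch x y) (hchsum : ∀ x, ∑ y, pch x y = 1)
    (r : (Fin N → X) → (Fin N → A) → (Fin N → Y) → ℝ)
    (hrpos : ∀ x a y, 0 < r x a y)
    (hrsum : ∑ x : Fin N → X, ∑ a : Fin N → A, ∑ y : Fin N → Y, r x a y * pch x y = 1) :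
    let I : ((Fin N → X) → (Fin N → A) → (Fin N → Y) → ℝ) → ℝ := fun q =>
      ∑ x : Fin N → X, ∑ a : Fin N → A, ∑ y : Fin N → Y,
        r x a y * pch x y * Real.log (q x a y / r x a y)
    let qstar : (Fin N → X) → (Fin N → A) → (Fin N → Y) → ℝ := fun x a y =>
      r x a y * pch x y / outMarg pch r y
    (∀ q : (Fin N → X) → (Fin N → A) → (Fin N → Y) → ℝ,
      (∀ x a y, 0 < q x a y) →
      (∀ y : Fin N → Y, ∑ x : Fin N → X, ∑ a : Fin N → A, q x a y = 1) →
      I q ≤ I qstar) ∧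
    I qstar = ∑ x : Fin N → X, ∑ a : Fin N → A, ∑ y : Fin N → Y,
      r x a y * pch x y * Real.log (pch x y / outMarg pch r y) := by
  intro I qstar
  haveI hX : Nonempty (Fin N → X) := by
    by_contra h
    rw [not_nonempty_iff] at h
    simp at hrsum
  haveI hA : Nonempty (Fin N → A) := by
    by_contra h
    rw [not_nonempty_iff] at h
    simp at hrsum
  have hM : ∀ y : Fin N → Y, 0 < outMarg pch r y := fun y =>
    Finset.sum_pos (fun x _ => Finset.sum_pos
      (fun a _ => mul_pos (hrpos x a y) (hchpos x y)) univ_nonempty) univ_nonempty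
  constructor
  · intro q hqpos hqsum
    rw [← sub_nonpos, ← Finset.sum_sub_distrib]
    simp_rw [← Finset.sum_sub_distrib]
    have hterm : ∀ x a y,
        r x a y * pch x y * Real.log (q x a y / r x a y) -
          r x a y * pch x y * Real.log (qstar x a y / r x a y)
        ≤ q x a y * outMarg pch r y - r x a y * pch x y := by
      intro x a y
      have hr := hrpos x a y
      have hp := hchpos x y
      have hq := hqpos x a y
      have hMy := hM y
      have hrp : 0 < r x a y * pch x y := mul_pos hr hp
      have hqs : 0 < qstar x a y := div_pos hrp hMy
      have hlog : Real.log (q x a y / r x a y) - Real.log (qstar x a y / r x a y)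
          = Real.log (q x a y / qstar x a y) := by
        rw [Real.log_div hq.ne' hr.ne', Real.log_div hqs.ne' hr.ne',
          Real.log_div hq.ne' hqs.ne']
        ring
      rw [← mul_sub, hlog]
      have hle : Real.log (q x a y / qstar x a y) ≤ q x a y / qstar x a y - 1 :=
        Real.log_le_sub_one_of_pos (div_pos hq hqs)
      calc r x a y * pch x y * Real.log (q x a y / qstar x a y)
          ≤ r x a y * pch x y * (q x a y / qstar x a y - 1) := by
            exact mul_le_mul_of_nonneg_left hle hrp.le
        _ = q x a y * outMarg pch r y - r x a y * pch x y := by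
            show r x a y * pch x y * (q x a y / (r x a y * pch x y / outMarg pch r y) - 1) = _
            rw [div_sub_one hqs.ne']
            show r x a y * pch x y *
              ((q x a y - r x a y * pch x y / outMarg pch r y) /
                (r x a y * pch x y / outMarg pch r y)) = _
            field_simp
            try ring
    calc (∑ x, ∑ a, ∑ y, (r x a y * pch x y * Real.log (q x a y / r x a y) -
            r x a y * pch x y * Real.log (qstar x a y / r x a y)))
        ≤ ∑ x, ∑ a, ∑ y, (q x a y * outMarg pch r y - r x a y * pch x y) := by
          apply Finset.sum_le_sum; intro x _
          apply Finset.sum_le_sum; intro a _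
          apply Finset.sum_le_sum; intro y _
          exact hterm x a y
      _ = 0 := by
          rw [swap3]
          apply Finset.sum_eq_zero
          intro y _
          simp_rw [Finset.sum_sub_distrib, ← Finset.sum_mul]
          rw [hqsum y, one_mul, sub_eq_zero]
          simp [outMarg, Finset.sum_mul]
  · apply Finset.sum_congr rfl; intro x _
    apply Finset.sum_congr rfl; intro a _
    apply Finset.sum_congr rfl; intro y _
    congr 2
    show r x a y * pch x y / outMarg pch r y / r x a y = pch x y / outMarg pch r y
    rw [div_right_comm, mul_div_cancel_left₀ _ (hrpos x a y).ne']
end
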